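/- The origin is an asymptotically stable equilibrium of the system ẋ₁ = x₂, ẋ₂ = −sin(x₁)cos(x₁) − x₂ − sin(x₃)cos(x₃), ẋ₃ = x₂ − x₃: for every ε > 0 there exists δ > 0 such that every solution with ‖x(0)‖ < δ satisfies ‖x(t)‖ < ε for all t ≥ 0, and δ can be chosen so that ‖x(0)‖ < δ implies x(t) → 0 as t → ∞. -/

import Mathlib

/-!
The quadratic form `V(x) = xᵀ P x` with `Aᵀ P + P A = -I`, where `A` is the linearisation of the
field at the origin, decreases along solutions at rate `-‖x‖²` up to the cubic remainders
`sin u cos u - u = O(|u|³)`. On the ball `‖x‖² ≤ 1/8` these are absorbed, giving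
`V̇ ≤ -V/4`; since `‖x‖²/4 ≤ V ≤ 2‖x‖²`, a sublevel set of `V` inside that ball is invariant and
`‖x t‖² ≤ 8 ‖x 0‖² e^{-t/4}`.
-/

/-- The 3-D trigonometric vector field `ẋ₁ = x₂`,
`ẋ₂ = −sin x₁ cos x₁ − x₂ − sin x₃ cos x₃`, `ẋ₃ = x₂ − x₃` on `ℝ³`. -/
noncomputable def trigField (x : EuclideanSpace ℝ (Fin 3)) :
    EuclideanSpace ℝ (Fin 3) :=
  WithLp.toLp 2 ![x 1,
    -(Real.sin (x 0) * Real.cos (x 0)) - x 1 - Real.sin (x 2) * Real.cos (x 2),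
    x 1 - x 2]

open Real Filter Set

/-- `V' ≤ -k V` is only assumed below the level `r`: the fence `V 0 e^{-kt} + ε` stays below `r`,
so the bound is available wherever `V` could touch the fence. -/
theorem le_mul_exp_of_hasDerivAt_le_neg_mul {V V' : ℝ → ℝ} {k r : ℝ} (hk : 0 < k)
    (hV : ∀ t ≥ 0, HasDerivAt V (V' t) t) (hV' : ∀ t ≥ 0, V t < r → V' t ≤ -k * V t)
    (h0 : 0 ≤ V 0) (h0r : V 0 < r) {t : ℝ} (ht : 0 ≤ t) :
    V t ≤ V 0 * exp (-k * t) := by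
  have fence : ∀ ε, 0 < ε → ε < r - V 0 → V t ≤ V 0 * exp (-k * t) + ε := by
    intro ε hε hεr
    have hB : ∀ s, HasDerivAt (fun s => V 0 * exp (-k * s) + ε) (-k * (V 0 * exp (-k * s))) s :=
      fun s => ((((hasDerivAt_id' s).const_mul (-k)).exp.const_mul (V 0)).add_const ε).congr_deriv
        (by ring)
    refine image_le_of_deriv_right_lt_deriv_boundary
      (fun s hs => (hV s hs.1).continuousAt.continuousWithinAt)
      (fun s hs => (hV s hs.1).hasDerivWithinAt)
      (by rw [mul_zero, exp_zero, mul_one]; linarith) hB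
      (fun s hs hVs => ?_) ⟨ht, le_rfl⟩
    have hexp : V 0 * exp (-k * s) ≤ V 0 :=
      mul_le_of_le_one_right h0 (exp_le_one_iff.2 (by nlinarith [hs.1]))
    calc V' s ≤ -k * V s := hV' s hs.1 (by linarith)
      _ = -k * (V 0 * exp (-k * s)) - k * ε := by rw [hVs]; ring
      _ < -k * (V 0 * exp (-k * s)) := by linarith [mul_pos hk hε]
  refine le_of_forall_pos_le_add fun ε hε => ?_
  calc V t ≤ V 0 * exp (-k * t) + min ε ((r - V 0) / 2) :=
        fence _ (lt_min hε (by linarith)) ((min_le_right _ _).trans_lt (by linarith))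
    _ ≤ V 0 * exp (-k * t) + ε := by gcongr; exact min_le_left _ _

theorem HasDerivAt.euclideanSpace_apply {ι : Type*} [Fintype ι] {x : ℝ → EuclideanSpace ℝ ι}
    {x' : EuclideanSpace ℝ ι} {t : ℝ} (h : HasDerivAt x x' t) (i : ι) :
    HasDerivAt (fun s => x s i) (x' i) t :=
  (PiLp.hasFDerivAt_apply 2 (x t) i).comp_hasDerivAt t h

theorem EuclideanSpace.norm_sq_fin_three (v : EuclideanSpace ℝ (Fin 3)) :
    ‖v‖ ^ 2 = v 0 ^ 2 + v 1 ^ 2 + v 2 ^ 2 := by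
  rw [EuclideanSpace.real_norm_sq_eq, Fin.sum_univ_three]

theorem abs_sin_mul_cos_sub_self_le (u : ℝ) : |sin u * cos u - u| ≤ 2 / 3 * |u| ^ 3 := by
  have h := abs_sub_sin_le (2 * u)
  have hsc : sin u * cos u - u = -(2 * u - sin (2 * u)) / 2 := by rw [sin_two_mul]; ring
  rw [hsc, abs_div, abs_neg, abs_two]
  rw [abs_mul, abs_two] at h
  linarith

/-- `xᵀ P x` for the solution `P` of `Aᵀ P + P A = -I`, `A = [[0,1,0],[-1,-1,-1],[0,1,-1]]`. -/
noncomputable def trigLyapunov (v : EuclideanSpace ℝ (Fin 3)) : ℝ :=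
  8/5 * v 0 ^ 2 + 4/5 * v 1 ^ 2 + 7/10 * v 2 ^ 2 + v 0 * v 1 - 3/5 * v 0 * v 2 - 2/5 * v 1 * v 2

/-- `⟪∇V v, trigField v⟫`, split into the linear part and the cubic remainder. -/
noncomputable def trigLyapunovDeriv (v : EuclideanSpace ℝ (Fin 3)) : ℝ :=
  -‖v‖ ^ 2 - (v 0 + 8/5 * v 1 - 2/5 * v 2) *
    ((sin (v 0) * cos (v 0) - v 0) + (sin (v 2) * cos (v 2) - v 2))

theorem norm_sq_le_four_mul_trigLyapunov (v : EuclideanSpace ℝ (Fin 3)) :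
    ‖v‖ ^ 2 ≤ 4 * trigLyapunov v := by
  rw [EuclideanSpace.norm_sq_fin_three, trigLyapunov]
  nlinarith [sq_nonneg (v 0 + 10/27 * v 1 - 2/9 * v 2), sq_nonneg (v 1 - 48/197 * v 2),
    sq_nonneg (v 2)]

theorem trigLyapunov_le_two_mul_norm_sq (v : EuclideanSpace ℝ (Fin 3)) :
    trigLyapunov v ≤ 2 * ‖v‖ ^ 2 := by
  rw [EuclideanSpace.norm_sq_fin_three, trigLyapunov]
  nlinarith [sq_nonneg (v 0 - 5/4 * v 1 + 3/4 * v 2), sq_nonneg (v 1 + v 2), sq_nonneg (v 2)]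

theorem hasDerivAt_trigLyapunov_comp {x : ℝ → EuclideanSpace ℝ (Fin 3)} {t : ℝ}
    (hx : HasDerivAt x (trigField (x t)) t) :
    HasDerivAt (fun s => trigLyapunov (x s)) (trigLyapunovDeriv (x t)) t := by
  have h0 := hx.euclideanSpace_apply 0
  have h1 := hx.euclideanSpace_apply 1
  have h2 := hx.euclideanSpace_apply 2
  simp only [trigField, PiLp.toLp_apply, Matrix.cons_val_zero, Matrix.cons_val_one,
    Matrix.cons_val_two, Matrix.head_cons, Matrix.tail_cons] at h0 h1 h2
  have H := ((((((h0.mul h0).const_mul (8/5 : ℝ)).add ((h1.mul h1).const_mul (4/5 : ℝ))).add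
    ((h2.mul h2).const_mul (7/10 : ℝ))).add (h0.mul h1)).sub
    ((h0.mul h2).const_mul (3/5 : ℝ))).sub ((h1.mul h2).const_mul (2/5 : ℝ))
  refine (H.congr_deriv ?_).congr_of_eventuallyEq (Eventually.of_forall fun s => ?_)
  · simp only [trigLyapunovDeriv, EuclideanSpace.norm_sq_fin_three]; ring
  · simp only [trigLyapunov, Pi.add_apply, Pi.sub_apply, Pi.mul_apply]; ring

theorem trigLyapunovDeriv_le (v : EuclideanSpace ℝ (Fin 3)) (hv : ‖v‖ ^ 2 ≤ 1 / 8) :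
    trigLyapunovDeriv v ≤ -(1/4) * trigLyapunov v := by
  have hnorm := EuclideanSpace.norm_sq_fin_three v
  have remainder_le : ∀ u : ℝ, u ^ 2 ≤ 1 / 8 → |sin u * cos u - u| ≤ |u| / 8 := fun u hu =>
    (abs_sin_mul_cos_sub_self_le u).trans (by rw [pow_succ, sq_abs]; nlinarith [abs_nonneg u])
  have h0 := remainder_le (v 0) (by nlinarith [sq_nonneg (v 1), sq_nonneg (v 2)])
  have h2 := remainder_le (v 2) (by nlinarith [sq_nonneg (v 0), sq_nonneg (v 1)])
  have hcoef : |v 0 + 8/5 * v 1 - 2/5 * v 2| ≤ |v 0| + 8/5 * |v 1| + 2/5 * |v 2| := by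
    rw [abs_le]
    constructor <;> linarith [le_abs_self (v 0), neg_abs_le (v 0), le_abs_self (v 1),
      neg_abs_le (v 1), le_abs_self (v 2), neg_abs_le (v 2)]
  have cross : -((v 0 + 8/5 * v 1 - 2/5 * v 2) *
      ((sin (v 0) * cos (v 0) - v 0) + (sin (v 2) * cos (v 2) - v 2))) ≤ ‖v‖ ^ 2 / 2 :=
    calc _ ≤ |v 0 + 8/5 * v 1 - 2/5 * v 2| *
          |(sin (v 0) * cos (v 0) - v 0) + (sin (v 2) * cos (v 2) - v 2)| := by
          rw [← abs_mul]; exact neg_le_abs _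
      _ ≤ (|v 0| + 8/5 * |v 1| + 2/5 * |v 2|) * (|v 0| / 8 + |v 2| / 8) :=
          mul_le_mul hcoef ((abs_add_le _ _).trans (add_le_add h0 h2)) (abs_nonneg _)
            (by positivity)
      _ ≤ ‖v‖ ^ 2 / 2 := by
          rw [hnorm, ← sq_abs (v 0), ← sq_abs (v 1), ← sq_abs (v 2)]
          nlinarith [sq_nonneg (|v 0| - |v 1|), sq_nonneg (|v 0| - |v 2|),
            sq_nonneg (|v 1| - |v 2|)]
  rw [trigLyapunovDeriv]
  linarith [trigLyapunov_le_two_mul_norm_sq v]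

theorem trigSystem_norm_sq_le {x : ℝ → EuclideanSpace ℝ (Fin 3)}
    (hx : ∀ t ≥ 0, HasDerivAt x (trigField (x t)) t) (hx0 : ‖x 0‖ < 1 / 8) {t : ℝ}
    (ht : 0 ≤ t) : ‖x t‖ ^ 2 ≤ 8 * ‖x 0‖ ^ 2 * exp (-(1/4) * t) := by
  have hV0 : trigLyapunov (x 0) < 1 / 32 := by
    have := trigLyapunov_le_two_mul_norm_sq (x 0)
    nlinarith [norm_nonneg (x 0)]
  have hdecay := le_mul_exp_of_hasDerivAt_le_neg_mul (by norm_num : (0 : ℝ) < 1 / 4)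
    (fun s hs => hasDerivAt_trigLyapunov_comp (hx s hs))
    (fun s _ hs => trigLyapunovDeriv_le (x s)
      (by linarith [norm_sq_le_four_mul_trigLyapunov (x s)]))
    (by linarith [norm_sq_le_four_mul_trigLyapunov (x 0), sq_nonneg ‖x 0‖]) hV0 ht
  have := trigLyapunov_le_two_mul_norm_sq (x 0)
  nlinarith [norm_sq_le_four_mul_trigLyapunov (x t), exp_pos (-(1/4) * t)]

/-- The origin is an asymptotically stable equilibrium of the 3-D trigonometric system:
for every `ε > 0` there is `δ > 0` such that every solution with `‖x 0‖ < δ` stays in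
the `ε`-ball for all `t ≥ 0` and converges to the origin as `t → ∞`. -/
theorem trigSystem_asymptotically_stable :
    ∀ ε > (0 : ℝ), ∃ δ > (0 : ℝ), ∀ x : ℝ → EuclideanSpace ℝ (Fin 3),
      (∀ t ≥ (0:ℝ), HasDerivAt x (trigField (x t)) t) → ‖x 0‖ < δ →
        (∀ t ≥ (0:ℝ), ‖x t‖ < ε) ∧ Filter.Tendsto x Filter.atTop (nhds 0) := by
  intro ε hε
  refine ⟨min (ε / 4) (1 / 8), by positivity, fun x hx hx0 => ?_⟩
  have hdecay : ∀ t ≥ 0, ‖x t‖ ^ 2 ≤ 8 * ‖x 0‖ ^ 2 * exp (-(1/4) * t) :=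
    fun t ht => trigSystem_norm_sq_le hx (hx0.trans_le (min_le_right _ _)) ht
  refine ⟨fun t ht => lt_of_pow_lt_pow_left₀ 2 hε.le ?_, ?_⟩
  · calc ‖x t‖ ^ 2 ≤ 8 * ‖x 0‖ ^ 2 * exp (-(1/4) * t) := hdecay t ht
      _ ≤ 8 * ‖x 0‖ ^ 2 := mul_le_of_le_one_right (by positivity) (exp_le_one_iff.2 (by linarith))
      _ < ε ^ 2 := by nlinarith [norm_nonneg (x 0), hx0.trans_le (min_le_left _ _)]
  · have hbound : Tendsto (fun t => 8 * ‖x 0‖ ^ 2 * exp (-(1/4) * t)) atTop (nhds 0) := by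
      simpa using (tendsto_exp_atBot.comp
        (tendsto_id.const_mul_atTop_of_neg (by norm_num : -(1/4 : ℝ) < 0))).const_mul
          (8 * ‖x 0‖ ^ 2)
    have hsq : Tendsto (fun t => ‖x t‖ ^ 2) atTop (nhds 0) :=
      squeeze_zero' (Eventually.of_forall fun t => sq_nonneg _)
        ((eventually_ge_atTop 0).mono hdecay) hbound
    refine tendsto_zero_iff_norm_tendsto_zero.2 ?_
    simpa [sqrt_sq (norm_nonneg _)] using hsq.sqrt
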